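/- arXiv:2111.05718 — 5 statements merged into one kernel-verified Lean document; each statement's English description precedes it below -/
import Mathlib

section
/- Let u, v : ℝ² → ℂ be given by u = g/f̄ and v = h/f for smooth nonvanishing complex functions f, g, h of (x,t), with f̄ the complex conjugate of f. If the bilinear equations i·D_x(g,f) + h·f̄ = 0, i·D_x(f,f̄) = -σ·h·h̄, i·D_t(h,f̄) + g·f = 0, and i·D_t(f,f̄) = σ·g·ḡ hold (where D_x(a,b) = a_x·b - a·b_x is the Hirota derivative and σ = ±1), then u and v solve the massive Thirring model i·u_x + v + σ·u·|v|² = 0 and i·v_t + u + σ·v·|u|² = 0. -/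
open ComplexConjugate

/-- Partial derivative in the `x` direction of a function of `(x,t) : ℝ × ℝ`. -/
noncomputable def dX (F : ℝ × ℝ → ℂ) (p : ℝ × ℝ) : ℂ := fderiv ℝ F p (1, 0)

/-- Partial derivative in the `t` direction of a function of `(x,t) : ℝ × ℝ`. -/
noncomputable def dT (F : ℝ × ℝ → ℂ) (p : ℝ × ℝ) : ℂ := fderiv ℝ F p (0, 1)

/-- Hirota bilinear derivative `D_x(a,b) = a_x·b - a·b_x`. -/
noncomputable def hirotaX (a b : ℝ × ℝ → ℂ) (p : ℝ × ℝ) : ℂ := dX a p * b p - a p * dX b p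

/-- Hirota bilinear derivative `D_t(a,b) = a_t·b - a·b_t`. -/
noncomputable def hirotaT (a b : ℝ × ℝ → ℂ) (p : ℝ × ℝ) : ℂ := dT a p * b p - a p * dT b p

lemma fderiv_div_apply' (a b : ℝ × ℝ → ℂ) (ha : Differentiable ℝ a) (hb : Differentiable ℝ b)
    (hb0 : ∀ q, b q ≠ 0) (p : ℝ × ℝ) (w : ℝ × ℝ) :
    fderiv ℝ (fun q => a q / b q) p w
      = (fderiv ℝ a p w * b p - a p * fderiv ℝ b p w) / (b p) ^ 2 := by
  have hc : DifferentiableAt ℝ (fun q => a q / b q) p := by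
    simp only [div_eq_mul_inv]
    exact (ha p).mul ((hb p).inv (hb0 p))
  have key : (fun q => (a q / b q) * b q) = a := funext fun q => div_mul_cancel₀ _ (hb0 q)
  have hm := fderiv_fun_mul (𝕜 := ℝ) hc (hb p)
  rw [key] at hm
  have hm' := congrArg (fun L : (ℝ × ℝ) →L[ℝ] ℂ => L w) hm
  simp only [ContinuousLinearMap.add_apply, ContinuousLinearMap.smul_apply, smul_eq_mul] at hm'
  have hbp := hb0 p
  field_simp at hm'
  rw [eq_div_iff (pow_ne_zero 2 hbp)]
  linear_combination -hm'

lemma fderiv_conj_apply (f : ℝ × ℝ → ℂ) (p : ℝ × ℝ) (w : ℝ × ℝ) :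
    fderiv ℝ (fun q => conj (f q)) p w = conj (fderiv ℝ f p w) := by
  have : (fun q => conj (f q)) = fun q => star (f q) := rfl
  rw [this, fderiv_star]
  rfl

lemma dX_conj (f : ℝ × ℝ → ℂ) (p : ℝ × ℝ) :
    dX (fun q => conj (f q)) p = conj (dX f p) := fderiv_conj_apply f p (1,0)

lemma dT_conj (f : ℝ × ℝ → ℂ) (p : ℝ × ℝ) :
    dT (fun q => conj (f q)) p = conj (dT f p) := fderiv_conj_apply f p (0,1)

theorem stmt0 (σ : ℝ) (hσ : σ = 1 ∨ σ = -1)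
    (f g h : ℝ × ℝ → ℂ)
    (hf : ContDiff ℝ (⊤ : ℕ∞) f) (hg : ContDiff ℝ (⊤ : ℕ∞) g) (hh : ContDiff ℝ (⊤ : ℕ∞) h)
    (hf0 : ∀ p, f p ≠ 0) (hg0 : ∀ p, g p ≠ 0) (hh0 : ∀ p, h p ≠ 0)
    (bil1 : ∀ p, Complex.I * hirotaX g f p + h p * conj (f p) = 0)
    (bil2 : ∀ p, Complex.I * hirotaX f (fun q => conj (f q)) p = -(σ : ℂ) * (h p * conj (h p)))
    (bil3 : ∀ p, Complex.I * hirotaT h (fun q => conj (f q)) p + g p * f p = 0)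
    (bil4 : ∀ p, Complex.I * hirotaT f (fun q => conj (f q)) p = (σ : ℂ) * (g p * conj (g p)))
    (u v : ℝ × ℝ → ℂ)
    (hu : u = fun p => g p / conj (f p))
    (hv : v = fun p => h p / f p) :
    (∀ p, Complex.I * dX u p + v p + (σ : ℂ) * u p * ((‖v p‖ : ℂ))^2 = 0) ∧
    (∀ p, Complex.I * dT v p + u p + (σ : ℂ) * v p * ((‖u p‖ : ℂ))^2 = 0) := by
  have hfd : Differentiable ℝ f := hf.differentiable (by simp)
  have hgd : Differentiable ℝ g := hg.differentiable (by simp)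
  have hhd : Differentiable ℝ h := hh.differentiable (by simp)
  have hFd : Differentiable ℝ (fun q => conj (f q)) := by
    have : (fun q => conj (f q)) = (⇑(Complex.conjCLE)) ∘ f := rfl
    rw [this]
    exact Complex.conjCLE.differentiable.comp hfd
  have hF0 : ∀ q, conj (f q) ≠ 0 := fun q => by
    simpa using hf0 q
  -- useful: |z|^2 as complex equals z * conj z
  have habs : ∀ z : ℂ, ((‖z‖ : ℂ))^2 = z * conj z := by
    intro z
    rw [Complex.mul_conj]
    norm_cast
    exact Complex.sq_norm z
  constructor
  · intro p
    have hdu : dX u p = (dX g p * conj (f p) - g p * conj (dX f p)) / (conj (f p)) ^ 2 := by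
      rw [hu]
      unfold dX
      rw [fderiv_div_apply' g (fun q => conj (f q)) hgd hFd hF0 p (1,0),
        fderiv_conj_apply]
    have b1 := bil1 p
    have b2 := bil2 p
    unfold hirotaX at b1 b2
    rw [dX_conj] at b2
    rw [hdu, hv, hu, habs]
    have hfp := hf0 p
    have hFp := hF0 p
    simp only [map_div₀]
    field_simp
    have b2' : Complex.I * (dX f p * conj (f p) - f p * conj (dX f p))
        = -(σ : ℂ) * (h p * conj (h p)) := b2
    linear_combination (conj (f p)) * b1 + (g p) * b2'
  · intro p
    have hdv : dT v p = (dT h p * f p - h p * dT f p) / (f p) ^ 2 := by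
      rw [hv]
      unfold dT
      rw [fderiv_div_apply' h f hhd hfd hf0 p (0,1)]
    have b3 := bil3 p
    have b4 := bil4 p
    unfold hirotaT at b3 b4
    rw [dT_conj] at b3 b4
    rw [hdv, hv, hu, habs]
    have hfp := hf0 p
    have hFp := hF0 p
    simp only [map_div₀, Complex.conj_conj]
    field_simp
    have b3' : Complex.I * (dT h p * conj (f p) - h p * conj (dT f p)) + g p * f p = 0 := b3
    have b4' : Complex.I * (dT f p * conj (f p) - f p * conj (dT f p))
        = (σ : ℂ) * (g p * conj (g p)) := b4
    linear_combination (f p) * b3' - (h p) * b4'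
end

section
/- Let ρ₁, ρ₂ be nonzero real constants and σ = ±1. Define u = ρ₁·(g/f̄)·E and v = ρ₂·(h/f)·E where E = exp(i(1+σρ₁ρ₂)((ρ₂/ρ₁)x + (ρ₁/ρ₂)t)). If the bilinear equations (i·D_x - ρ₂/ρ₁)(g,f) = -(ρ₂/ρ₁)·h·f̄, (i·D_x - σρ₂²)(f,f̄) = -σρ₂²·h·h̄, (i·D_t - ρ₁/ρ₂)(h,f̄) = -(ρ₁/ρ₂)·g·f, and (i·D_t - σρ₁²)(f̄,f) = -σρ₁²·g·ḡ hold, then u and v solve the massive Thirring model i·u_x + v + σ·u·|v|² = 0, i·v_t + u + σ·v·|u|² = 0. -/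
open ComplexConjugate

lemma dirD_mul (a b : ℝ × ℝ → ℂ) (p : ℝ × ℝ) (w : ℝ × ℝ) (ha : DifferentiableAt ℝ a p)
    (hb : DifferentiableAt ℝ b p) :
    fderiv ℝ (fun q => a q * b q) p w = fderiv ℝ a p w * b p + a p * fderiv ℝ b p w := by
  rw [fderiv_fun_mul ha hb]
  simp [smul_eq_mul]; ring

lemma dirD_conj (a : ℝ × ℝ → ℂ) (p : ℝ × ℝ) (w : ℝ × ℝ) (ha : DifferentiableAt ℝ a p) :
    fderiv ℝ (fun q => conj (a q)) p w = conj (fderiv ℝ a p w) := by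
  have h : HasFDerivAt (fun q => conj (a q))
      ((Complex.conjCLE : ℂ →L[ℝ] ℂ).comp (fderiv ℝ a p)) p :=
    (Complex.conjCLE.hasFDerivAt.comp p ha.hasFDerivAt : )
  rw [h.fderiv]
  simp

lemma dirD_inv (a : ℝ × ℝ → ℂ) (p : ℝ × ℝ) (w : ℝ × ℝ) (ha : DifferentiableAt ℝ a p)
    (h0 : a p ≠ 0) :
    fderiv ℝ (fun q => (a q)⁻¹) p w = -fderiv ℝ a p w / a p ^ 2 := by
  have h : HasFDerivAt (fun q => (a q)⁻¹)
      ((-ContinuousLinearMap.mulLeftRight ℝ ℂ (a p)⁻¹ (a p)⁻¹).comp (fderiv ℝ a p)) p :=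
    ((hasFDerivAt_inv' (𝕜 := ℝ) h0).comp p ha.hasFDerivAt : )
  rw [h.fderiv]
  simp only [ContinuousLinearMap.comp_apply, ContinuousLinearMap.neg_apply,
    ContinuousLinearMap.mulLeftRight_apply]
  rw [neg_div, neg_inj, eq_div_iff (pow_ne_zero 2 h0)]
  have : (a p)⁻¹ * fderiv ℝ a p w * (a p)⁻¹ * a p ^ 2
      = fderiv ℝ a p w * ((a p)⁻¹ * a p) * ((a p)⁻¹ * a p) := by ring
  rw [this, inv_mul_cancel₀ h0, mul_one, mul_one]

lemma dirD_formula (ρ : ℝ) (a b c : ℝ × ℝ → ℂ) (p : ℝ × ℝ) (w : ℝ × ℝ)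
    (ha : DifferentiableAt ℝ a p) (hb : DifferentiableAt ℝ b p) (hc : DifferentiableAt ℝ c p)
    (hb0 : b p ≠ 0) :
    fderiv ℝ (fun q => (ρ : ℂ) * (a q / b q) * c q) p w
      = (ρ : ℂ) * ((fderiv ℝ a p w * b p - a p * fderiv ℝ b p w) / b p ^ 2) * c p
        + (ρ : ℂ) * (a p / b p) * fderiv ℝ c p w := by
  have hab : DifferentiableAt ℝ (fun q => a q * (b q)⁻¹) p := ha.mul (hb.inv hb0)
  have hrab : DifferentiableAt ℝ (fun q => (ρ : ℂ) * (a q * (b q)⁻¹)) p := hab.const_mul _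
  simp only [div_eq_mul_inv]
  rw [dirD_mul (fun q => (ρ : ℂ) * (a q * (b q)⁻¹)) c p w hrab hc]
  rw [fderiv_const_mul hab]
  simp only [ContinuousLinearMap.smul_apply, smul_eq_mul]
  rw [dirD_mul a (fun q => (b q)⁻¹) p w ha (hb.inv hb0)]
  rw [dirD_inv b p w hb hb0]
  field_simp
  ring

lemma exp_lin_hasFDeriv (c1 c2 : ℂ) (p : ℝ × ℝ) :
    HasFDerivAt (fun q : ℝ × ℝ => Complex.exp (c1 * q.1 + c2 * q.2))
      (Complex.exp (c1 * p.1 + c2 * p.2) •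
        (c1 • (Complex.ofRealCLM.comp (ContinuousLinearMap.fst ℝ ℝ ℝ)) +
         c2 • (Complex.ofRealCLM.comp (ContinuousLinearMap.snd ℝ ℝ ℝ)))) p := by
  have hlin : HasFDerivAt (fun q : ℝ × ℝ => c1 * (q.1 : ℂ) + c2 * (q.2 : ℂ))
      (c1 • (Complex.ofRealCLM.comp (ContinuousLinearMap.fst ℝ ℝ ℝ)) +
       c2 • (Complex.ofRealCLM.comp (ContinuousLinearMap.snd ℝ ℝ ℝ))) p := by
    apply HasFDerivAt.add
    · exact (Complex.ofRealCLM.hasFDerivAt.comp _ (hasFDerivAt_fst)).const_mul c1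
    · exact (Complex.ofRealCLM.hasFDerivAt.comp _ (hasFDerivAt_snd)).const_mul c2
  exact (Complex.hasDerivAt_exp _).comp_hasFDerivAt p hlin

lemma exp_lin_dX (c1 c2 : ℂ) (p : ℝ × ℝ) :
    dX (fun q : ℝ × ℝ => Complex.exp (c1 * q.1 + c2 * q.2)) p
      = c1 * Complex.exp (c1 * p.1 + c2 * p.2) := by
  rw [dX, (exp_lin_hasFDeriv c1 c2 p).fderiv]
  simp [smul_eq_mul]
  ring

lemma exp_lin_dT (c1 c2 : ℂ) (p : ℝ × ℝ) :
    dT (fun q : ℝ × ℝ => Complex.exp (c1 * q.1 + c2 * q.2)) p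
      = c2 * Complex.exp (c1 * p.1 + c2 * p.2) := by
  rw [dT, (exp_lin_hasFDeriv c1 c2 p).fderiv]
  simp [smul_eq_mul]
  ring

lemma abs_sq_eq (z : ℂ) : ((‖z‖ : ℂ)) ^ 2 = z * conj z := by
  rw [← Complex.ofReal_pow, Complex.sq_norm, Complex.mul_conj]

set_option maxHeartbeats 2000000 in
theorem stmt2 (σ ρ₁ ρ₂ : ℝ) (hσ : σ = 1 ∨ σ = -1) (hρ₁ : ρ₁ ≠ 0) (hρ₂ : ρ₂ ≠ 0)
    (f g h : ℝ × ℝ → ℂ)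
    (hf : ContDiff ℝ (⊤ : ℕ∞) f) (hg : ContDiff ℝ (⊤ : ℕ∞) g) (hh : ContDiff ℝ (⊤ : ℕ∞) h)
    (hf0 : ∀ p, f p ≠ 0) (hg0 : ∀ p, g p ≠ 0) (hh0 : ∀ p, h p ≠ 0)
    (E : ℝ × ℝ → ℂ)
    (hE : E = fun p => Complex.exp (Complex.I * ((1 + σ * ρ₁ * ρ₂ : ℝ) : ℂ) *
      (((ρ₂ / ρ₁ : ℝ) : ℂ) * (p.1 : ℂ) + ((ρ₁ / ρ₂ : ℝ) : ℂ) * (p.2 : ℂ))))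
    (bil1 : ∀ p, Complex.I * hirotaX g f p - ((ρ₂ / ρ₁ : ℝ) : ℂ) * (g p * f p)
      = -((ρ₂ / ρ₁ : ℝ) : ℂ) * (h p * conj (f p)))
    (bil2 : ∀ p, Complex.I * hirotaX f (fun q => conj (f q)) p
        - ((σ * ρ₂ ^ 2 : ℝ) : ℂ) * (f p * conj (f p))
      = -((σ * ρ₂ ^ 2 : ℝ) : ℂ) * (h p * conj (h p)))
    (bil3 : ∀ p, Complex.I * hirotaT h (fun q => conj (f q)) p
        - ((ρ₁ / ρ₂ : ℝ) : ℂ) * (h p * conj (f p))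
      = -((ρ₁ / ρ₂ : ℝ) : ℂ) * (g p * f p))
    (bil4 : ∀ p, Complex.I * hirotaT (fun q => conj (f q)) f p
        - ((σ * ρ₁ ^ 2 : ℝ) : ℂ) * (conj (f p) * f p)
      = -((σ * ρ₁ ^ 2 : ℝ) : ℂ) * (g p * conj (g p)))
    (u v : ℝ × ℝ → ℂ)
    (hu : u = fun p => (ρ₁ : ℂ) * (g p / conj (f p)) * E p)
    (hv : v = fun p => (ρ₂ : ℂ) * (h p / f p) * E p) :
    (∀ p, Complex.I * dX u p + v p + (σ : ℂ) * u p * ((‖v p‖ : ℂ)) ^ 2 = 0) ∧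
    (∀ p, Complex.I * dT v p + u p + (σ : ℂ) * v p * ((‖u p‖ : ℂ)) ^ 2 = 0) := by
  have hρ₁c : (ρ₁ : ℂ) ≠ 0 := Complex.ofReal_ne_zero.mpr hρ₁
  have hρ₂c : (ρ₂ : ℂ) ≠ 0 := Complex.ofReal_ne_zero.mpr hρ₂
  set c1 : ℂ := Complex.I * ((1 + σ*ρ₁*ρ₂ : ℝ):ℂ) * ((ρ₂/ρ₁:ℝ):ℂ) with hc1
  set c2 : ℂ := Complex.I * ((1 + σ*ρ₁*ρ₂ : ℝ):ℂ) * ((ρ₁/ρ₂:ℝ):ℂ) with hc2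
  have hEfun : E = fun q : ℝ × ℝ => Complex.exp (c1 * q.1 + c2 * q.2) := by
    rw [hE]; funext q; rw [hc1, hc2]; congr 1; ring
  rw [hEfun] at hu hv
  subst hu; subst hv
  have hfd : ∀ q, DifferentiableAt ℝ f q := fun q => (hf.differentiable (by simp)).differentiableAt
  have hgd : ∀ q, DifferentiableAt ℝ g q := fun q => (hg.differentiable (by simp)).differentiableAt
  have hhd : ∀ q, DifferentiableAt ℝ h q := fun q => (hh.differentiable (by simp)).differentiableAt
  have hcfd : ∀ q, DifferentiableAt ℝ (fun r => conj (f r)) q := fun q =>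
    ((Complex.conjCLE : ℂ →L[ℝ] ℂ).differentiable.differentiableAt).comp q (hfd q)
  have hcf0 : ∀ q, conj (f q) ≠ 0 := fun q => by simpa using hf0 q
  have hEd : ∀ q, DifferentiableAt ℝ (fun r : ℝ × ℝ => Complex.exp (c1*r.1+c2*r.2)) q :=
    fun q => (exp_lin_hasFDeriv c1 c2 q).differentiableAt
  have hEE : ∀ q : ℝ × ℝ,
      Complex.exp (c1*q.1+c2*q.2) * conj (Complex.exp (c1*q.1+c2*q.2)) = 1 := by
    intro q
    rw [← Complex.exp_conj, ← Complex.exp_add]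
    have hz : (c1*q.1+c2*q.2) + conj (c1*q.1+c2*q.2) = 0 := by
      rw [hc1]
      simp [map_add, map_mul, Complex.conj_I, Complex.conj_ofReal, hc2]
      ring
    rw [hz, Complex.exp_zero]
  constructor
  · intro p
    have b1 := bil1 p
    have b2 := bil2 p
    simp only [hirotaX, dX] at b1 b2
    rw [dirD_conj f p (1,0) (hfd p)] at b2
    have hdu : dX (fun p => (ρ₁ : ℂ) * (g p / conj (f p)) * Complex.exp (c1*p.1+c2*p.2)) p
        = (ρ₁:ℂ) * ((fderiv ℝ g p (1,0) * conj (f p) - g p * conj (fderiv ℝ f p (1,0)))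
            / (conj (f p))^2) * Complex.exp (c1*p.1+c2*p.2)
          + (ρ₁:ℂ) * (g p / conj (f p)) * (c1 * Complex.exp (c1*p.1+c2*p.2)) := by
      show fderiv ℝ _ p (1,0) = _
      rw [dirD_formula ρ₁ g (fun q => conj (f q)) _ p (1,0) (hgd p) (hcfd p) (hEd p) (hcf0 p)]
      rw [dirD_conj f p (1,0) (hfd p)]
      rw [show fderiv ℝ (fun r : ℝ × ℝ => Complex.exp (c1*r.1+c2*r.2)) p (1,0)
        = dX (fun r : ℝ × ℝ => Complex.exp (c1*r.1+c2*r.2)) p from rfl, exp_lin_dX]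
    simp only [hdu, abs_sq_eq]
    simp only [map_mul, map_div₀, Complex.conj_ofReal]
    have hE1 := hEE p
    set Ep := Complex.exp (c1*p.1+c2*p.2) with hEp
    set cEp := conj Ep with hcEp
    set F := f p; set G := g p; set H := h p
    set Fx := fderiv ℝ f p (1,0); set Gx := fderiv ℝ g p (1,0)
    set cF := conj F; set cH := conj H; set cFx := conj Fx
    rw [hc1]
    push_cast [hρ₁, hρ₂] at b1 b2 ⊢
    have hF0 : F ≠ 0 := hf0 p
    have hcF0 : cF ≠ 0 := hcf0 p
    field_simp at b1 b2
    field_simp [hF0, hcF0]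
    linear_combination (cF * Ep) * b1 + ((ρ₁:ℂ) * G * Ep) * b2
      + ((σ:ℂ) * ρ₁ * ρ₂^2 * G * H * cH * Ep) * hE1
      + (Ep * cF * G * ρ₂ * F * (1 + ρ₁ * σ * ρ₂)) * Complex.I_sq
  · intro p
    have b3 := bil3 p
    have b4 := bil4 p
    simp only [hirotaT, dT] at b3 b4
    rw [dirD_conj f p (0,1) (hfd p)] at b3 b4
    have hdv : dT (fun p => (ρ₂ : ℂ) * (h p / f p) * Complex.exp (c1*p.1+c2*p.2)) p
        = (ρ₂:ℂ) * ((fderiv ℝ h p (0,1) * f p - h p * fderiv ℝ f p (0,1)) / (f p)^2)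
            * Complex.exp (c1*p.1+c2*p.2)
          + (ρ₂:ℂ) * (h p / f p) * (c2 * Complex.exp (c1*p.1+c2*p.2)) := by
      show fderiv ℝ _ p (0,1) = _
      rw [dirD_formula ρ₂ h f _ p (0,1) (hhd p) (hfd p) (hEd p) (hf0 p)]
      rw [show fderiv ℝ (fun r : ℝ × ℝ => Complex.exp (c1*r.1+c2*r.2)) p (0,1)
        = dT (fun r : ℝ × ℝ => Complex.exp (c1*r.1+c2*r.2)) p from rfl, exp_lin_dT]
    simp only [hdv, abs_sq_eq]
    simp only [map_mul, map_div₀, Complex.conj_ofReal, Complex.conj_conj]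
    have hE1 := hEE p
    set Ep := Complex.exp (c1*p.1+c2*p.2) with hEp
    set cEp := conj Ep with hcEp
    set F := f p; set G := g p; set H := h p
    set Ft := fderiv ℝ f p (0,1); set Ht := fderiv ℝ h p (0,1)
    set cF := conj F; set cG := conj G; set cFt := conj Ft
    rw [hc2]
    push_cast [hρ₁, hρ₂] at b3 b4 ⊢
    have hF0 : F ≠ 0 := hf0 p
    have hcF0 : cF ≠ 0 := hcf0 p
    field_simp at b3 b4
    field_simp [hF0, hcF0]
    linear_combination (F * Ep) * b3 + ((ρ₂:ℂ) * H * Ep) * b4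
      + ((σ:ℂ) * ρ₂ * ρ₁^2 * H * G * cG * Ep) * hE1
      + (Ep * F * H * ρ₁ * cF * (1 + ρ₂ * σ * ρ₁)) * Complex.I_sq
end

section
/- Let p₁ = a₁ + i·b₁ ∈ ℂ with a₁ ≠ 0, σ ∈ {1,-1}, and define f(η) = 1 + (i·σ·(a₁+i·b₁)/(4a₁²))·e^{2η} for η ∈ ℝ. Then |f(η)|² = (√(a₁²+b₁²)/(2a₁²))·e^{2η}·(cosh(2η + 2δ) - σb₁/√(a₁²+b₁²)), where e^{2δ} = √(a₁²+b₁²)/(4a₁²). In particular f(η) ≠ 0 for all η ∈ ℝ. -/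
theorem stmt13 (a₁ b₁ σ δ : ℝ) (ha : a₁ ≠ 0) (hσ : σ = 1 ∨ σ = -1)
    (hδ : Real.exp (2 * δ) = Real.sqrt (a₁ ^ 2 + b₁ ^ 2) / (4 * a₁ ^ 2))
    (f : ℝ → ℂ)
    (hf : f = fun (η : ℝ) => 1 + Complex.I * (σ : ℂ) * ((a₁ : ℂ) + Complex.I * (b₁ : ℂ)) /
      ((4 * a₁ ^ 2 : ℝ) : ℂ) * Complex.exp (2 * (η : ℂ))) :
    (∀ η : ℝ, (‖f η‖) ^ 2 =
      (Real.sqrt (a₁ ^ 2 + b₁ ^ 2) / (2 * a₁ ^ 2)) * Real.exp (2 * η) *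
        (Real.cosh (2 * η + 2 * δ) - σ * b₁ / Real.sqrt (a₁ ^ 2 + b₁ ^ 2))) ∧
    (∀ η : ℝ, f η ≠ 0) := by
  subst hf
  have ha2 : (0:ℝ) < a₁ ^ 2 := by positivity
  have hs : 0 < Real.sqrt (a₁ ^ 2 + b₁ ^ 2) := Real.sqrt_pos.2 (by positivity)
  have hs2 : Real.sqrt (a₁ ^ 2 + b₁ ^ 2) ^ 2 = a₁ ^ 2 + b₁ ^ 2 :=
    Real.sq_sqrt (by positivity)
  have hσ2 : σ ^ 2 = 1 := by rcases hσ with h | h <;> simp [h]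
  have hσ0 : σ ≠ 0 := by rcases hσ with h | h <;> simp [h]
  set s := Real.sqrt (a₁ ^ 2 + b₁ ^ 2) with hsdef
  have key : ∀ η : ℝ,
      (1 + Complex.I * (σ : ℂ) * ((a₁ : ℂ) + Complex.I * (b₁ : ℂ)) /
        ((4 * a₁ ^ 2 : ℝ) : ℂ) * Complex.exp (2 * (η : ℂ)))
      = ((1 - σ * b₁ * Real.exp (2 * η) / (4 * a₁ ^ 2) : ℝ) : ℂ)
          + ((σ * a₁ * Real.exp (2 * η) / (4 * a₁ ^ 2) : ℝ) : ℂ) * Complex.I := by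
    intro η
    have hE : Complex.exp (2 * (η : ℂ)) = ((Real.exp (2 * η) : ℝ) : ℂ) := by
      rw [Complex.ofReal_exp]; push_cast; ring_nf
    rw [hE]
    push_cast
    linear_combination ((σ : ℂ) * (b₁ : ℂ) * Complex.exp (2 * (η : ℂ)) /
      (4 * (a₁ : ℂ) ^ 2)) * Complex.I_sq
  constructor
  · intro η
    simp only [key η, Complex.sq_norm, Complex.normSq_add_mul_I]
    have hE : 0 < Real.exp (2 * η) := Real.exp_pos _
    have hEne : Real.exp (2 * η) ≠ 0 := hE.ne'
    have hcosh : Real.cosh (2 * η + 2 * δ)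
        = (Real.exp (2 * η) * (s / (4 * a₁ ^ 2))
          + (4 * a₁ ^ 2) / (Real.exp (2 * η) * s)) / 2 := by
      rw [Real.cosh_eq]
      have h1 : Real.exp (2 * η + 2 * δ) = Real.exp (2 * η) * (s / (4 * a₁ ^ 2)) := by
        rw [Real.exp_add, hδ]
      have h2 : Real.exp (-(2 * η + 2 * δ)) = (4 * a₁ ^ 2) / (Real.exp (2 * η) * s) := by
        rw [Real.exp_neg, h1]
        field_simp
      rw [h1, h2]
    rw [hcosh]
    have hR0 : s / (2 * a₁ ^ 2) * Real.exp (2 * η) *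
        ((Real.exp (2 * η) * (s / (4 * a₁ ^ 2))
          + (4 * a₁ ^ 2) / (Real.exp (2 * η) * s)) / 2 - σ * b₁ / s)
        = s ^ 2 * Real.exp (2 * η) ^ 2 / (16 * a₁ ^ 4) + 1
            - σ * b₁ * Real.exp (2 * η) / (2 * a₁ ^ 2) := by
      field_simp
      ring
    rw [hR0, hs2]
    linear_combination ((a₁ ^ 2 + b₁ ^ 2) * Real.exp (2 * η) ^ 2 / (16 * a₁ ^ 4)) * hσ2
  · intro η hzero
    have hz : (1 + Complex.I * (σ : ℂ) * ((a₁ : ℂ) + Complex.I * (b₁ : ℂ)) /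
        ((4 * a₁ ^ 2 : ℝ) : ℂ) * Complex.exp (2 * (η : ℂ))) = 0 := hzero
    rw [key η] at hz
    have h2 : σ * a₁ * Real.exp (2 * η) / (4 * a₁ ^ 2) = 0 := by
      have := congrArg Complex.im hz
      simp only [Complex.add_im, Complex.ofReal_im, Complex.mul_im, Complex.I_im,
        Complex.I_re, Complex.ofReal_re, Complex.zero_im, mul_one, mul_zero,
        zero_add, add_zero, zero_mul] at this
      exact this
    exact (div_ne_zero (mul_ne_zero (mul_ne_zero hσ0 ha) (Real.exp_ne_zero _))
      (by positivity)) h2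
end

section
/- Let a₁, b₁ ∈ ℝ with a₁ ≠ 0 and σ ∈ {1,-1}, and set η-dependent functions via the tau functions f = 1 + (iσ(a₁+ib₁)/(4a₁²))e^{2η}, g = (i/(a₁+ib₁))e^{η+iθ}, h = e^{η+iθ} (with θ ∈ ℝ arbitrary). Then |h|²/|f|² = (2a₁²/√(a₁²+b₁²))·(cosh(2η+2δ) - σb₁/√(a₁²+b₁²))⁻¹ and |g|²/|f|² = |h|²/((a₁²+b₁²)|f|²), where e^{2δ} = √(a₁²+b₁²)/(4a₁²). -/
set_option maxHeartbeats 1000000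

theorem stmt14 (a₁ b₁ σ δ : ℝ) (ha : a₁ ≠ 0) (hσ : σ = 1 ∨ σ = -1)
    (hδ : Real.exp (2 * δ) = Real.sqrt (a₁ ^ 2 + b₁ ^ 2) / (4 * a₁ ^ 2))
    (f g h : ℝ → ℝ → ℂ)
    (hf : f = fun (η : ℝ) (_ : ℝ) => 1 + Complex.I * (σ : ℂ) * ((a₁ : ℂ) + Complex.I * (b₁ : ℂ)) /
      ((4 * a₁ ^ 2 : ℝ) : ℂ) * Complex.exp (2 * (η : ℂ)))
    (hg : g = fun (η : ℝ) (θ : ℝ) => Complex.I / ((a₁ : ℂ) + Complex.I * (b₁ : ℂ)) *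
      Complex.exp ((η : ℂ) + Complex.I * (θ : ℂ)))
    (hh : h = fun (η : ℝ) (θ : ℝ) => Complex.exp ((η : ℂ) + Complex.I * (θ : ℂ))) :
    ∀ η θ : ℝ,
      (‖h η θ‖) ^ 2 / (‖f η θ‖) ^ 2 =
        (2 * a₁ ^ 2 / Real.sqrt (a₁ ^ 2 + b₁ ^ 2)) *
          (Real.cosh (2 * η + 2 * δ) - σ * b₁ / Real.sqrt (a₁ ^ 2 + b₁ ^ 2))⁻¹ ∧
      (‖g η θ‖) ^ 2 / (‖f η θ‖) ^ 2 =
        (‖h η θ‖) ^ 2 / ((a₁ ^ 2 + b₁ ^ 2) * (‖f η θ‖) ^ 2) := by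
  subst hf hg hh
  intro η θ
  have hab : (0:ℝ) < a₁ ^ 2 + b₁ ^ 2 := by positivity
  set s := Real.sqrt (a₁ ^ 2 + b₁ ^ 2) with hs
  have hs0 : 0 < s := Real.sqrt_pos.2 hab
  have hs2 : s ^ 2 = a₁ ^ 2 + b₁ ^ 2 := Real.sq_sqrt hab.le
  have hE0 : 0 < Real.exp (2 * η) := Real.exp_pos _
  set E := Real.exp (2 * η) with hEdef
  -- |h|^2
  have hhabs : ‖Complex.exp ((η : ℂ) + Complex.I * (θ : ℂ))‖ = Real.exp η := by
    rw [Complex.norm_exp]; simp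
  -- f as re + im * I
  have hfeq : (1 + Complex.I * (σ : ℂ) * ((a₁ : ℂ) + Complex.I * (b₁ : ℂ)) /
      ((4 * a₁ ^ 2 : ℝ) : ℂ) * Complex.exp (2 * (η : ℂ)))
      = Complex.ofReal (1 - σ * b₁ * E / (4 * a₁ ^ 2)) +
        Complex.ofReal (σ * a₁ * E / (4 * a₁ ^ 2)) * Complex.I := by
    have h1 : Complex.exp (2 * (η : ℂ)) = ((E : ℝ) : ℂ) := by
      rw [hEdef, Complex.ofReal_exp]; push_cast; ring_nf
    rw [h1]
    have ha' : (a₁:ℂ) ≠ 0 := Complex.ofReal_ne_zero.2 ha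
    push_cast
    field_simp
    ring_nf
    simp [Complex.I_sq]
    ring_nf
  have hfabs : ‖1 + Complex.I * (σ : ℂ) * ((a₁ : ℂ) + Complex.I * (b₁ : ℂ)) /
      ((4 * a₁ ^ 2 : ℝ) : ℂ) * Complex.exp (2 * (η : ℂ))‖ ^ 2
      = (1 - σ * b₁ * E / (4 * a₁ ^ 2)) ^ 2 + (σ * a₁ * E / (4 * a₁ ^ 2)) ^ 2 := by
    rw [hfeq, Complex.sq_norm, Complex.normSq_add_mul_I]
  have hσ2 : σ ^ 2 = 1 := by rcases hσ with rfl | rfl <;> norm_num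
  have hσ0 : σ ≠ 0 := by rcases hσ with rfl | rfl <;> norm_num
  have ha2 : (0:ℝ) < a₁ ^ 2 := by positivity
  have hEsq : Real.exp η ^ 2 = E := by
    rw [hEdef, two_mul, Real.exp_add, sq]
  have hy : σ * a₁ * E / (4 * a₁ ^ 2) ≠ 0 := by
    apply div_ne_zero
    · exact mul_ne_zero (mul_ne_zero hσ0 ha) hE0.ne'
    · positivity
  have hA : 0 < (1 - σ * b₁ * E / (4 * a₁ ^ 2)) ^ 2 + (σ * a₁ * E / (4 * a₁ ^ 2)) ^ 2 := by
    have h1 := sq_nonneg (1 - σ * b₁ * E / (4 * a₁ ^ 2))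
    have h2 : (0:ℝ) < (σ * a₁ * E / (4 * a₁ ^ 2)) ^ 2 :=
      (sq_nonneg _).lt_of_ne (Ne.symm (pow_ne_zero 2 hy))
    linarith
  have hblt : b₁ ^ 2 < s ^ 2 := by rw [hs2]; linarith
  have hb1 : b₁ < s := by nlinarith [le_abs_self b₁, abs_nonneg b₁, sq_abs b₁]
  have hb1' : -s < b₁ := by nlinarith [neg_abs_le b₁, abs_nonneg b₁, sq_abs b₁]
  have hcosh : Real.cosh (2 * η + 2 * δ) = (E * (s / (4 * a₁ ^ 2)) + (E * (s / (4 * a₁ ^ 2)))⁻¹) / 2 := by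
    rw [Real.cosh_eq, Real.exp_neg, Real.exp_add, hδ, hEdef]
  clear_value s E
  have hD : 0 < Real.cosh (2 * η + 2 * δ) - σ * b₁ / s := by
    have h1 := Real.one_le_cosh (2 * η + 2 * δ)
    have h2 : σ * b₁ / s < 1 := by
      rw [div_lt_one hs0]
      rcases hσ with rfl | rfl <;> nlinarith
    linarith
  have hq : (4:ℝ) * a₁ ^ 2 ≠ 0 := by positivity
  have hAD : (1 - σ * b₁ * E / (4 * a₁ ^ 2)) ^ 2 + (σ * a₁ * E / (4 * a₁ ^ 2)) ^ 2 =
      (2 * s * E / (4 * a₁ ^ 2)) * (Real.cosh (2 * η + 2 * δ) - σ * b₁ / s) := by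
    rw [hcosh]
    field_simp [hq, hs0.ne', hE0.ne']
    ring_nf
    linear_combination (-(E ^ 2)) * hs2 +
      (E ^ 2 * (a₁ ^ 2 + b₁ ^ 2)) * hσ2
  constructor
  · rw [hhabs, hfabs, hEsq, hAD]
    field_simp [hD.ne', hs0.ne', hE0.ne']
    have h := hD
    rw [sub_pos, div_lt_iff₀ hs0] at h
    have hYne : Real.cosh (2 * η + 2 * δ) * s - σ * b₁ ≠ 0 := by nlinarith
    ring
  · rw [hhabs]
    have hc : ‖(a₁ : ℂ) + Complex.I * (b₁ : ℂ)‖ ^ 2 = a₁ ^ 2 + b₁ ^ 2 := by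
      rw [Complex.sq_norm, show (a₁ : ℂ) + Complex.I * (b₁ : ℂ)
          = Complex.ofReal a₁ + Complex.ofReal b₁ * Complex.I from by ring,
        Complex.normSq_add_mul_I]
    rw [norm_mul, norm_div, Complex.norm_I, hhabs, mul_pow, div_pow, one_pow, hc,
      one_div_mul_eq_div, div_div]
end

section
/- Let α, ρ₁, ρ₂ > 0 and define Δ⁺(κ) = (ρ₁² + ακρ₂² + 2√(ακ(1+ρ₁ρ₂)ρ₁²ρ₂²))/(ρ₁ρ₂) for κ > 0. Then the function A_u(κ) = √(ρ₁² + Δ⁺(κ)) - ρ₁ is strictly increasing on (0,∞) and the function A_v(κ) = √(ρ₂² + Δ⁺(κ)/(ακ)) - ρ₂ is strictly decreasing on (0,∞). -/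
theorem stmt16 (α ρ₁ ρ₂ : ℝ) (hα : 0 < α) (hρ₁ : 0 < ρ₁) (hρ₂ : 0 < ρ₂)
    (Δ : ℝ → ℝ)
    (hΔ : Δ = fun κ => (ρ₁ ^ 2 + α * κ * ρ₂ ^ 2 +
      2 * Real.sqrt (α * κ * (1 + ρ₁ * ρ₂) * ρ₁ ^ 2 * ρ₂ ^ 2)) / (ρ₁ * ρ₂)) :
    StrictMonoOn (fun κ => Real.sqrt (ρ₁ ^ 2 + Δ κ) - ρ₁) (Set.Ioi 0) ∧
    StrictAntiOn (fun κ => Real.sqrt (ρ₂ ^ 2 + Δ κ / (α * κ)) - ρ₂) (Set.Ioi 0) := by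
  subst hΔ
  constructor
  · intro a ha b hb hab
    simp only [Set.mem_Ioi] at ha hb
    set sa := Real.sqrt (α * a * (1 + ρ₁ * ρ₂) * ρ₁ ^ 2 * ρ₂ ^ 2) with hsa
    set sb := Real.sqrt (α * b * (1 + ρ₁ * ρ₂) * ρ₁ ^ 2 * ρ₂ ^ 2) with hsb
    have hsa0 : 0 ≤ sa := Real.sqrt_nonneg _
    have hsab : sa ≤ sb := by
      apply Real.sqrt_le_sqrt
      nlinarith [mul_pos hρ₁ hρ₂, sq_nonneg ρ₁, sq_nonneg ρ₂,
        mul_pos (mul_pos hα (sub_pos.mpr hab)) (mul_pos (pow_pos hρ₁ 2) (pow_pos hρ₂ 2))]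
    have hd : (ρ₁ ^ 2 + α * a * ρ₂ ^ 2 + 2 * sa) / (ρ₁ * ρ₂)
        < (ρ₁ ^ 2 + α * b * ρ₂ ^ 2 + 2 * sb) / (ρ₁ * ρ₂) := by
      apply div_lt_div_of_pos_right _ (mul_pos hρ₁ hρ₂)
      nlinarith [mul_pos hα (sub_pos.mpr hab), pow_pos hρ₂ 2]
    have h0 : 0 ≤ ρ₁ ^ 2 + (ρ₁ ^ 2 + α * a * ρ₂ ^ 2 + 2 * sa) / (ρ₁ * ρ₂) := by positivity
    simp only
    have := Real.sqrt_lt_sqrt (by linarith [div_nonneg (by positivity :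
      (0:ℝ) ≤ ρ₁ ^ 2 + α * a * ρ₂ ^ 2 + 2 * sa) (le_of_lt (mul_pos hρ₁ hρ₂))])
      (by linarith : ρ₁ ^ 2 + (ρ₁ ^ 2 + α * a * ρ₂ ^ 2 + 2 * sa) / (ρ₁ * ρ₂)
        < ρ₁ ^ 2 + (ρ₁ ^ 2 + α * b * ρ₂ ^ 2 + 2 * sb) / (ρ₁ * ρ₂))
    linarith
  · intro a ha b hb hab
    simp only [Set.mem_Ioi] at ha hb
    set sa := Real.sqrt (α * a * (1 + ρ₁ * ρ₂) * ρ₁ ^ 2 * ρ₂ ^ 2) with hsa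
    set sb := Real.sqrt (α * b * (1 + ρ₁ * ρ₂) * ρ₁ ^ 2 * ρ₂ ^ 2) with hsb
    have hsa0 : 0 < sa := Real.sqrt_pos.mpr (by positivity)
    have hsb0 : 0 < sb := Real.sqrt_pos.mpr (by positivity)
    have hsa2 : sa ^ 2 = α * a * (1 + ρ₁ * ρ₂) * ρ₁ ^ 2 * ρ₂ ^ 2 :=
      Real.sq_sqrt (by positivity)
    have hsb2 : sb ^ 2 = α * b * (1 + ρ₁ * ρ₂) * ρ₁ ^ 2 * ρ₂ ^ 2 :=
      Real.sq_sqrt (by positivity)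
    -- key: sb * a ≤ sa * b
    have hkey : sb * a ≤ sa * b := by
      have e1 : sb * a = Real.sqrt (α * b * (1 + ρ₁ * ρ₂) * ρ₁ ^ 2 * ρ₂ ^ 2 * a ^ 2) := by
        rw [Real.sqrt_mul (by positivity), Real.sqrt_sq ha.le]
      have e2 : sa * b = Real.sqrt (α * a * (1 + ρ₁ * ρ₂) * ρ₁ ^ 2 * ρ₂ ^ 2 * b ^ 2) := by
        rw [Real.sqrt_mul (by positivity), Real.sqrt_sq hb.le]
      rw [e1, e2]
      apply Real.sqrt_le_sqrt
      nlinarith [mul_pos (mul_pos hα (mul_pos ha hb)) (mul_pos (mul_pos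
        (by positivity : (0:ℝ) < 1 + ρ₁ * ρ₂) (pow_pos hρ₁ 2)) (pow_pos hρ₂ 2)),
        sub_pos.mpr hab]
    have hd : (ρ₁ ^ 2 + α * b * ρ₂ ^ 2 + 2 * sb) / (ρ₁ * ρ₂) / (α * b)
        < (ρ₁ ^ 2 + α * a * ρ₂ ^ 2 + 2 * sa) / (ρ₁ * ρ₂) / (α * a) := by
      rw [div_div, div_div, div_lt_div_iff₀ (by positivity) (by positivity)]
      have h1 : 0 < ρ₁ ^ 2 * α * (b - a) :=
        mul_pos (mul_pos (pow_pos hρ₁ 2) hα) (sub_pos.mpr hab)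
      nlinarith [mul_le_mul_of_nonneg_left hkey (le_of_lt (mul_pos hα
        (mul_pos hρ₁ hρ₂))), mul_pos hρ₁ hρ₂]
    have h0b : 0 ≤ ρ₂ ^ 2 + (ρ₁ ^ 2 + α * b * ρ₂ ^ 2 + 2 * sb) / (ρ₁ * ρ₂) / (α * b) := by
      positivity
    simp only
    have := Real.sqrt_lt_sqrt h0b (by linarith :
      ρ₂ ^ 2 + (ρ₁ ^ 2 + α * b * ρ₂ ^ 2 + 2 * sb) / (ρ₁ * ρ₂) / (α * b)
        < ρ₂ ^ 2 + (ρ₁ ^ 2 + α * a * ρ₂ ^ 2 + 2 * sa) / (ρ₁ * ρ₂) / (α * a))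
    linarith
end
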